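/- For propositional formulas without Δ, standard and restricted Gödel semantics over [0,1] coincide: a Δ-free formula F evaluates to 1 under all interpretations into [0,1] if and only if it evaluates to 1 under all interpretations assigning every variable a value strictly below 1. -/
import Mathlib


noncomputable def gimp (x y : ℝ) : ℝ := if x ≤ y then 1 else y

/-- Δ-free propositional Gödel formulas. -/
inductive GF : Type
  | var : ℕ → GF
  | bot : GF
  | top : GF
  | and : GF → GF → GF
  | or : GF → GF → GF
  | imp : GF → GF → GF

noncomputable def GF.eval (v : ℕ → ℝ) : GF → ℝ
  | var i => v i
  | bot => 0
  | top => 1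
  | and a b => min (a.eval v) (b.eval v)
  | or a b => max (a.eval v) (b.eval v)
  | imp a b => gimp (a.eval v) (b.eval v)

lemma GF.eval_mem (v : ℕ → ℝ) (hv : ∀ i, v i ∈ Set.Icc (0:ℝ) 1) :
    ∀ F : GF, F.eval v ∈ Set.Icc (0:ℝ) 1 := by
  intro F
  induction F with
  | var i => exact hv i
  | bot => simp [GF.eval]
  | top => simp [GF.eval]
  | and a b ha hb =>
      obtain ⟨ha0, ha1⟩ := ha; obtain ⟨hb0, hb1⟩ := hb
      exact ⟨le_min ha0 hb0, min_le_of_left_le ha1⟩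
  | or a b ha hb =>
      obtain ⟨ha0, ha1⟩ := ha; obtain ⟨hb0, hb1⟩ := hb
      exact ⟨le_max_of_le_left ha0, max_le ha1 hb1⟩
  | imp a b ha hb =>
      obtain ⟨hb0, hb1⟩ := hb
      simp only [GF.eval, gimp]
      split
      · exact ⟨zero_le_one, le_refl 1⟩
      · exact ⟨hb0, hb1⟩

lemma GF.eval_half (v : ℕ → ℝ) (hv : ∀ i, v i ∈ Set.Icc (0:ℝ) 1) :
    ∀ F : GF, GF.eval (fun i => v i / 2) F = (GF.eval v F) / 2 ∨
      (GF.eval v F = 1 ∧ GF.eval (fun i => v i / 2) F = 1) := by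
  intro F
  induction F with
  | var i => left; rfl
  | bot => left; simp [GF.eval]
  | top => right; simp [GF.eval]
  | and a b ha hb =>
      obtain ⟨hxa0, hxa1⟩ := GF.eval_mem v hv a
      obtain ⟨hxb0, hxb1⟩ := GF.eval_mem v hv b
      simp only [GF.eval] at *
      rcases ha with ha | ⟨ha1, ha2⟩ <;> rcases hb with hb | ⟨hb1, hb2⟩
      · left; rw [ha, hb]
        rcases le_total (a.eval v) (b.eval v) with h | h
        · rw [min_eq_left h, min_eq_left (by linarith)]
        · rw [min_eq_right h, min_eq_right (by linarith)]
      · left; rw [ha, hb2, hb1]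
        rw [min_eq_left hxa1, min_eq_left (by linarith)]
      · left; rw [hb, ha2, ha1]
        rw [min_eq_right hxb1, min_eq_right (by linarith)]
      · right; rw [ha1, ha2, hb1, hb2]; simp
  | or a b ha hb =>
      obtain ⟨hxa0, hxa1⟩ := GF.eval_mem v hv a
      obtain ⟨hxb0, hxb1⟩ := GF.eval_mem v hv b
      simp only [GF.eval] at *
      rcases ha with ha | ⟨ha1, ha2⟩ <;> rcases hb with hb | ⟨hb1, hb2⟩
      · left; rw [ha, hb]
        rcases le_total (a.eval v) (b.eval v) with h | h
        · rw [max_eq_right h, max_eq_right (by linarith)]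
        · rw [max_eq_left h, max_eq_left (by linarith)]
      · right; rw [hb1, hb2, ha]
        constructor
        · rw [max_eq_right hxa1]
        · rw [max_eq_right (by linarith)]
      · right; rw [ha1, ha2, hb]
        constructor
        · rw [max_eq_left hxb1]
        · rw [max_eq_left (by linarith)]
      · right; rw [ha1, ha2, hb1, hb2]; simp
  | imp a b ha hb =>
      obtain ⟨hxa0, hxa1⟩ := GF.eval_mem v hv a
      obtain ⟨hxb0, hxb1⟩ := GF.eval_mem v hv b
      simp only [GF.eval, gimp] at *
      rcases ha with ha | ⟨ha1, ha2⟩ <;> rcases hb with hb | ⟨hb1, hb2⟩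
      · rw [ha, hb]
        rcases le_or_gt (a.eval v) (b.eval v) with h | h
        · right
          rw [if_pos h, if_pos (by linarith)]
          exact ⟨rfl, rfl⟩
        · left
          rw [if_neg (not_le.mpr h), if_neg (not_le.mpr (by linarith))]
      · right; rw [hb1, hb2]
        have hwa1 : GF.eval (fun i => v i / 2) a ≤ 1 := by rw [ha]; linarith
        rw [if_pos hxa1, if_pos hwa1]
        exact ⟨rfl, rfl⟩
      · rw [ha1, ha2, hb]
        rcases le_or_gt (1:ℝ) (b.eval v) with h | h
        · have hb1' : b.eval v = 1 := le_antisymm hxb1 h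
          left
          rw [if_pos h, hb1', if_neg (by norm_num)]
        · left
          rw [if_neg (not_le.mpr h), if_neg (not_le.mpr (by linarith))]
      · right; rw [ha1, ha2, hb1, hb2]; simp

/-- For Δ-free formulas, standard and restricted Gödel semantics over [0,1]
agree on validity. -/
theorem standard_eq_restricted_validity_delta_free (F : GF) :
    (∀ v : ℕ → ℝ, (∀ i, v i ∈ Set.Icc (0:ℝ) 1) → F.eval v = 1) ↔
    (∀ v : ℕ → ℝ, (∀ i, v i ∈ Set.Ico (0:ℝ) 1) → F.eval v = 1) := by
  constructor
  · intro h v hv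
    exact h v fun i => ⟨(hv i).1, le_of_lt (hv i).2⟩
  · intro h v hv
    have hw : ∀ i, (fun i => v i / 2) i ∈ Set.Ico (0:ℝ) 1 := by
      intro i
      obtain ⟨h0, h1⟩ := hv i
      exact ⟨by linarith, by linarith⟩
    have h1 := h _ hw
    rcases GF.eval_half v hv F with heq | ⟨heq, _⟩
    · exfalso
      rw [heq] at h1
      have := (GF.eval_mem v hv F).2
      linarith
    · exact heq
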